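/- Under the Markov assumption X_S − X_0 − X_T for disjoint S,T ⊆ L, and v(S) = I(X_S; X_0 | X_{L\S}), the core of (L,v) equals the set of (R_l)_{l∈L} such that for every S ⊆ L, I(X_S; X_0) − I(X_S; X_{L\S}) ≤ Σ_{i∈S} R_i ≤ I(X_S; X_0). -/

import Mathlib

noncomputable section
open Finset
open scoped Classical BigOperators

/-- Probability of an event under a pmf on a finite sample space. -/
def Pr {Ω : Type} [Fintype Ω] (p : Ω → ℝ) (E : Ω → Prop) : ℝ :=
  ∑ ω : Ω, if E ω then p ω else 0

/-- `p` is a probability mass function. -/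
def IsPMF {Ω : Type} [Fintype Ω] (p : Ω → ℝ) : Prop :=
  (∀ ω, 0 ≤ p ω) ∧ (∑ ω : Ω, p ω) = 1

/-- Shannon entropy of a finitely-valued random variable `X` under pmf `p`. -/
def ent {Ω α : Type} [Fintype Ω] [Fintype α] (p : Ω → ℝ) (X : Ω → α) : ℝ :=
  -∑ a : α, Pr p (fun ω => X ω = a) * Real.log (Pr p (fun ω => X ω = a))

/-- Conditional Shannon entropy `H(X|Y)`. -/
def condEnt {Ω α β : Type} [Fintype Ω] [Fintype α] [Fintype β]
    (p : Ω → ℝ) (X : Ω → α) (Y : Ω → β) : ℝ :=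
  ent p (fun ω => (X ω, Y ω)) - ent p Y

/-- Mutual information `I(X;Y)`. -/
def mi {Ω α β : Type} [Fintype Ω] [Fintype α] [Fintype β]
    (p : Ω → ℝ) (X : Ω → α) (Y : Ω → β) : ℝ :=
  ent p X + ent p Y - ent p (fun ω => (X ω, Y ω))

/-- Conditional mutual information `I(X;Y|Z)`. -/
def cmi {Ω α β γ : Type} [Fintype Ω] [Fintype α] [Fintype β] [Fintype γ]
    (p : Ω → ℝ) (X : Ω → α) (Y : Ω → β) (Z : Ω → γ) : ℝ :=
  ent p (fun ω => (X ω, Z ω)) + ent p (fun ω => (Y ω, Z ω))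
    - ent p (fun ω => (X ω, Y ω, Z ω)) - ent p Z

/-- `X` and `Y` are conditionally independent given `Z` (Markov chain `X - Z - Y`). -/
def CondIndep {Ω α β γ : Type} [Fintype Ω] [Fintype α] [Fintype β] [Fintype γ]
    (p : Ω → ℝ) (X : Ω → α) (Y : Ω → β) (Z : Ω → γ) : Prop :=
  ∀ (a : α) (b : β) (c : γ),
    Pr p (fun ω => X ω = a ∧ Y ω = b ∧ Z ω = c) * Pr p (fun ω => Z ω = c)
      = Pr p (fun ω => X ω = a ∧ Z ω = c) * Pr p (fun ω => Y ω = b ∧ Z ω = c)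

/-- The tuple random variable `X_S = (X_l)_{l ∈ S}`. -/
def XS {Ω L 𝒳 : Type} [Fintype Ω] (X : L → Ω → 𝒳) (S : Finset L) :
    Ω → (S → 𝒳) :=
  fun ω i => X i ω

/-- The value function of the secret-key generation game:
`v(S) = I(X_S; X_0 | X_{L\S})`. -/
def vGame {Ω L 𝒳 β : Type} [Fintype Ω] [Fintype L] [DecidableEq L] [Fintype 𝒳] [Fintype β]
    (p : Ω → ℝ) (X : L → Ω → 𝒳) (X0 : Ω → β) (S : Finset L) : ℝ :=
  cmi p (XS X S) X0 (XS X Sᶜ)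

/-!
Under the Markov condition `X_S - X_0 - X_{Sᶜ}` the conditional mutual information
`I(X_S; X_{Sᶜ} | X_0)` vanishes, and the chain rule `I(A; B, C) = I(A; C) + I(A; B | C)`, expanded
in the two orders of `(X_0, X_{Sᶜ})`, turns `v(S) = I(X_S; X_0 | X_{Sᶜ})` into
`I(X_S; X_0) - I(X_S; X_{Sᶜ})`. The chain rule alone also gives `v(L) - v(Sᶜ) = I(X_S; X_0)`.
Finally, for any game with `v(∅) = 0` the core is `{R | v(S) ≤ R(S) ≤ v(L) - v(Sᶜ) for all S}`:
efficiency `R(L) = v(L)` turns the core inequality for `Sᶜ` into the upper bound for `S`.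
-/

section Entropy

variable {Ω α β γ : Type} [Fintype Ω] [Fintype α] [Fintype β] [Fintype γ] {p : Ω → ℝ}

lemma Pr_congr {E F : Ω → Prop} (h : ∀ ω, E ω ↔ F ω) : Pr p E = Pr p F := by
  simp only [Pr, h]

lemma single_le_Pr (hp : ∀ ω, 0 ≤ p ω) {E : Ω → Prop} {ω : Ω} (hω : E ω) : p ω ≤ Pr p E := by
  have hle := single_le_sum (f := fun ω => if E ω then p ω else 0)
    (fun ω _ => by split_ifs <;> simp [hp ω]) (mem_univ ω)
  rw [Pr]
  simpa [hω] using hle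

lemma sum_Pr_mul (p : Ω → ℝ) (X : Ω → α) (g : α → ℝ) :
    ∑ a, Pr p (fun ω => X ω = a) * g a = ∑ ω, p ω * g (X ω) := by
  simp only [Pr, sum_mul, ite_mul, zero_mul]
  rw [sum_comm]
  simp

lemma ent_eq_sum (p : Ω → ℝ) (X : Ω → α) :
    ent p X = -∑ ω, p ω * Real.log (Pr p fun ω' => X ω' = X ω) :=
  congrArg Neg.neg (sum_Pr_mul p X fun a => Real.log (Pr p fun ω => X ω = a))

lemma ent_eq_of_eq_iff_eq {X : Ω → α} {Y : Ω → β} (h : ∀ ω ω', X ω = X ω' ↔ Y ω = Y ω') :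
    ent p X = ent p Y := by
  simp only [ent_eq_sum, fun ω ω' => h ω' ω]

lemma ent_pair_comm (A : Ω → α) (B : Ω → β) :
    ent p (fun ω => (A ω, B ω)) = ent p (fun ω => (B ω, A ω)) :=
  ent_eq_of_eq_iff_eq fun _ _ => by simp only [Prod.ext_iff, and_comm]

lemma ent_eq_zero_of_const (hp : IsPMF p) {C : Ω → γ} (hC : ∀ ω ω', C ω = C ω') :
    ent p C = 0 := by
  have hPr : ∀ ω, (Pr p fun ω' => C ω' = C ω) = 1 := fun ω => by
    simp only [Pr, hC _ ω, if_true, hp.2]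
  simp [ent_eq_sum, hPr]

lemma ent_pair_eq_of_const_right {A : Ω → α} {C : Ω → γ} (hC : ∀ ω ω', C ω = C ω') :
    ent p (fun ω => (A ω, C ω)) = ent p A :=
  ent_eq_of_eq_iff_eq fun ω ω' => by simp [Prod.ext_iff, hC ω ω']

lemma mi_comm (X : Ω → α) (Y : Ω → β) : mi p X Y = mi p Y X := by
  rw [mi, mi, ent_pair_comm]
  ring

lemma mi_congr_right {X : Ω → α} {Y : Ω → β} {Y' : Ω → γ}
    (h : ∀ ω ω', Y ω = Y ω' ↔ Y' ω = Y' ω') : mi p X Y = mi p X Y' := by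
  have hXY : ent p (fun ω => (X ω, Y ω)) = ent p (fun ω => (X ω, Y' ω)) :=
    ent_eq_of_eq_iff_eq fun ω ω' => by simp only [Prod.ext_iff, h]
  rw [mi, mi, ent_eq_of_eq_iff_eq h, hXY]

lemma cmi_comm (A : Ω → α) (B : Ω → β) (C : Ω → γ) : cmi p A B C = cmi p B A C := by
  have hswap : ent p (fun ω => (A ω, B ω, C ω)) = ent p (fun ω => (B ω, A ω, C ω)) :=
    ent_eq_of_eq_iff_eq fun _ _ => by simp only [Prod.ext_iff]; tauto
  rw [cmi, cmi, hswap]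
  ring

lemma mi_pair_eq_mi_add_cmi (A : Ω → α) (B : Ω → β) (C : Ω → γ) :
    mi p A (fun ω => (B ω, C ω)) = mi p A C + cmi p A B C := by
  rw [mi, mi, cmi]
  ring

lemma cmi_eq_mi_of_const_right (hp : IsPMF p) (A : Ω → α) (B : Ω → β) {C : Ω → γ}
    (hC : ∀ ω ω', C ω = C ω') : cmi p A B C = mi p A B := by
  have hABC : ent p (fun ω => (A ω, B ω, C ω)) = ent p (fun ω => (A ω, B ω)) :=
    ent_eq_of_eq_iff_eq fun ω ω' => by simp [Prod.ext_iff, hC ω ω']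
  rw [cmi, mi, ent_pair_eq_of_const_right hC, ent_pair_eq_of_const_right hC, hABC,
    ent_eq_zero_of_const hp hC]
  ring

lemma cmi_eq_zero_of_const_left {A : Ω → α} (B : Ω → β) (C : Ω → γ)
    (hA : ∀ ω ω', A ω = A ω') :
    cmi p A B C = 0 := by
  have hAC : ent p (fun ω => (A ω, C ω)) = ent p C :=
    ent_eq_of_eq_iff_eq fun ω ω' => by simp [Prod.ext_iff, hA ω ω']
  have hABC : ent p (fun ω => (A ω, B ω, C ω)) = ent p (fun ω => (B ω, C ω)) :=
    ent_eq_of_eq_iff_eq fun ω ω' => by simp [Prod.ext_iff, hA ω ω']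
  rw [cmi, hAC, hABC]
  ring

/-- On an atom of positive mass, `P(a,b,c) P(c) = P(a,c) P(b,c)` with all factors positive, so the
log-likelihoods in the four entropies cancel pointwise. -/
lemma cmi_eq_zero_of_condIndep (hp : ∀ ω, 0 ≤ p ω) {A : Ω → α} {B : Ω → β} {C : Ω → γ}
    (h : CondIndep p A B C) : cmi p A B C = 0 := by
  have hpoint : ∀ ω,
      p ω * Real.log (Pr p fun ω' => (A ω', B ω', C ω') = (A ω, B ω, C ω))
        + p ω * Real.log (Pr p fun ω' => C ω' = C ω)
      = p ω * Real.log (Pr p fun ω' => (A ω', C ω') = (A ω, C ω))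
        + p ω * Real.log (Pr p fun ω' => (B ω', C ω') = (B ω, C ω)) := by
    intro ω
    rcases (hp ω).eq_or_lt with h0 | hpos
    · simp [← h0]
    have hne : ∀ E : Ω → Prop, E ω → Pr p E ≠ 0 := fun E hE =>
      (hpos.trans_le (single_le_Pr hp hE)).ne'
    simp only [Prod.mk.injEq]
    rw [← mul_add, ← mul_add, ← Real.log_mul, ← Real.log_mul, h (A ω) (B ω) (C ω)]
    all_goals exact hne _ (by simp)
  have hsum := sum_congr rfl fun ω (_ : ω ∈ univ) => hpoint ω
  simp only [sum_add_distrib] at hsum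
  rw [cmi, ent_eq_sum, ent_eq_sum, ent_eq_sum, ent_eq_sum]
  linarith

end Entropy

lemma core_iff_forall_le_sum_le {L : Type} [Fintype L] [DecidableEq L] {v : Finset L → ℝ}
    (hv : v ∅ = 0) (R : L → ℝ) :
    ((∑ l, R l = v univ) ∧ ∀ S, S ⊂ univ → v S ≤ ∑ i ∈ S, R i)
      ↔ ∀ S, v S ≤ ∑ i ∈ S, R i ∧ ∑ i ∈ S, R i ≤ v univ - v Sᶜ := by
  constructor
  · rintro ⟨hsum, hcore⟩
    have hlower : ∀ S, v S ≤ ∑ i ∈ S, R i := fun S => by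
      rcases eq_or_ne S univ with rfl | hS
      · exact hsum.ge
      · exact hcore S (ssubset_univ_iff.2 hS)
    refine fun S => ⟨hlower S, ?_⟩
    linarith [hlower Sᶜ, sum_add_sum_compl S R]
  · intro h
    have huniv := h univ
    rw [compl_univ, hv, sub_zero] at huniv
    exact ⟨le_antisymm huniv.2 huniv.1, fun S _ => (h S).1⟩

lemma XS_eq_iff {Ω L 𝒳 : Type} [Fintype Ω] (X : L → Ω → 𝒳) {S : Finset L} {ω ω' : Ω} :
    XS X S ω = XS X S ω' ↔ ∀ i ∈ S, X i ω = X i ω' := by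
  simp [XS, funext_iff]

section Game

variable {Ω L 𝒳 β : Type} [Fintype Ω] [Fintype L] [DecidableEq L] [Fintype 𝒳] [Fintype β]
  {p : Ω → ℝ} (X : L → Ω → 𝒳) (X0 : Ω → β)

lemma vGame_empty : vGame p X X0 ∅ = 0 :=
  cmi_eq_zero_of_const_left _ _ fun _ _ => by simp [XS_eq_iff]

lemma vGame_univ (hp : IsPMF p) : vGame p X X0 univ = mi p (XS X univ) X0 :=
  cmi_eq_mi_of_const_right hp _ _ fun _ _ => by simp [XS_eq_iff]

lemma vGame_univ_sub_vGame_compl (hp : IsPMF p) (S : Finset L) :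
    vGame p X X0 univ - vGame p X X0 Sᶜ = mi p (XS X S) X0 := by
  have hsplit : ∀ ω ω', XS X univ ω = XS X univ ω'
      ↔ (XS X Sᶜ ω, XS X S ω) = (XS X Sᶜ ω', XS X S ω') := fun ω ω' => by
    simp only [Prod.ext_iff, XS_eq_iff, mem_univ, forall_const, mem_compl]
    exact ⟨fun h => ⟨fun i _ => h i, fun i _ => h i⟩,
      fun h i => (em (i ∈ S)).elim (h.2 i) (h.1 i)⟩
  rw [vGame_univ X X0 hp, mi_comm, mi_congr_right hsplit, mi_pair_eq_mi_add_cmi, vGame,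
    compl_compl, cmi_comm, mi_comm]
  ring

lemma vGame_eq_mi_sub_mi (hp : ∀ ω, 0 ≤ p ω) {S : Finset L}
    (hM : CondIndep p (XS X S) (XS X Sᶜ) X0) :
    vGame p X X0 S = mi p (XS X S) X0 - mi p (XS X S) (XS X Sᶜ) := by
  have hchain := mi_pair_eq_mi_add_cmi (p := p) (XS X S) X0 (XS X Sᶜ)
  have hchain' := mi_pair_eq_mi_add_cmi (p := p) (XS X S) (XS X Sᶜ) X0
  rw [cmi_eq_zero_of_condIndep hp hM,
    mi_congr_right (Y' := fun ω => (X0 ω, XS X Sᶜ ω)) fun _ _ => by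
      simp only [Prod.ext_iff, and_comm]] at hchain'
  rw [vGame]
  linarith

end Game

/-- the core of the game `(L, v)` with `v(S) = I(X_S;X_0|X_{L\S})`
is the set of rate vectors `(R_l)` with
`I(X_S;X_0) - I(X_S;X_{L\S}) ≤ Σ_S R ≤ I(X_S;X_0)` for all `S ⊆ L`. -/
theorem statement7 {Ω L 𝒳 β : Type} [Fintype Ω] [Fintype L] [DecidableEq L] [Fintype 𝒳] [Fintype β]
    (p : Ω → ℝ) (hp : IsPMF p) (X : L → Ω → 𝒳) (X0 : Ω → β)
    (hM : ∀ S T : Finset L, Disjoint S T → CondIndep p (XS X S) (XS X T) X0)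
    (R : L → ℝ) :
    ((∑ l : L, R l = vGame p X X0 Finset.univ) ∧
      ∀ S : Finset L, S ⊂ Finset.univ → vGame p X X0 S ≤ ∑ i ∈ S, R i)
    ↔ (∀ S : Finset L,
        mi p (XS X S) X0 - mi p (XS X S) (XS X Sᶜ) ≤ ∑ i ∈ S, R i ∧
        ∑ i ∈ S, R i ≤ mi p (XS X S) X0) := by
  rw [core_iff_forall_le_sum_le (vGame_empty X X0)]
  refine forall_congr' fun S => ?_
  rw [vGame_eq_mi_sub_mi X X0 hp.1 (hM S Sᶜ disjoint_compl_right),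
    vGame_univ_sub_vGame_compl X X0 hp S]
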